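/- arXiv:1802.04497 — 5 statements merged into one kernel-verified Lean document; each statement's English description precedes it below -/
import Mathlib

section
/- With u_c(p0,p1) = 4 c0 c1 D_c(p0,p1) + (c0-c1)^2, the Bayes error ε = ∫ min{c0 p0(x), c1 p1(x)} dx satisfies the upper bound ε ≤ 1/2 - (1/2) u_c(p0,p1). -/
/-! Writing `a = c₀ p₀`, `b = c₁ p₁`, the identity `min a b = (a + b)/2 - |a - b|/2` and
`∫ (a + b) = c₀ + c₁ = 1` give `ε = 1/2 - (1/2) ∫ |a - b|`; the pointwise bound
`(a - b)²/(a + b) ≤ |a - b|` then yields `∫ |a - b| ≥ u_c`. -/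

open MeasureTheory

section OrderedField

variable {K : Type*} [Field K] [LinearOrder K] [IsStrictOrderedRing K]

lemma min_eq_add_div_two_sub_abs_sub_div_two (a b : K) :
    min a b = (a + b) / 2 - |a - b| / 2 := by
  linarith [min_add_max a b, max_sub_min_eq_abs' a b]

lemma sq_sub_div_add_le_abs_sub {a b : K} (ha : 0 ≤ a) (hb : 0 ≤ b) :
    (a - b) ^ 2 / (a + b) ≤ |a - b| := by
  rcases (add_nonneg ha hb).eq_or_lt with hab | hab
  · rw [← hab, div_zero]
    exact abs_nonneg _
  · rw [div_le_iff₀ hab, ← sq_abs]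
    have : |a - b| ≤ a + b := abs_sub_le_iff.2 ⟨by linarith, by linarith⟩
    nlinarith [abs_nonneg (a - b)]

end OrderedField

section Integral

variable {α : Type*} [MeasurableSpace α] {μ : Measure α} {f g : α → ℝ}

lemma integral_min_eq (hf : Integrable f μ) (hg : Integrable g μ) :
    ∫ x, min (f x) (g x) ∂μ = (∫ x, f x ∂μ + ∫ x, g x ∂μ) / 2 - (∫ x, |f x - g x| ∂μ) / 2 := by
  simp_rw [min_eq_add_div_two_sub_abs_sub_div_two]
  have hsum : Integrable (fun x => (f x + g x) / 2) μ := (hf.add hg).div_const 2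
  have habs : Integrable (fun x => |f x - g x| / 2) μ := (hf.sub hg).abs.div_const 2
  rw [integral_sub hsum habs, integral_div, integral_div, integral_add hf hg]

lemma integral_sq_sub_div_add_le_integral_abs_sub (hf : Integrable f μ) (hg : Integrable g μ)
    (hf0 : ∀ x, 0 ≤ f x) (hg0 : ∀ x, 0 ≤ g x) :
    ∫ x, (f x - g x) ^ 2 / (f x + g x) ∂μ ≤ ∫ x, |f x - g x| ∂μ :=
  integral_mono_of_nonneg
    (ae_of_all _ fun x => div_nonneg (sq_nonneg _) (add_nonneg (hf0 x) (hg0 x)))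
    (hf.sub hg).abs
    (ae_of_all _ fun x => sq_sub_div_add_le_abs_sub (hf0 x) (hg0 x))

end Integral

theorem bayes_error_upper_bound_general {d : ℕ} (p0 p1 : (Fin d → ℝ) → ℝ) (c0 c1 : ℝ)
    (hp0 : ∀ x, 0 ≤ p0 x) (hp1 : ∀ x, 0 ≤ p1 x)
    (hi0 : Integrable p0) (hi1 : Integrable p1)
    (h10 : ∫ x, p0 x = 1) (h11 : ∫ x, p1 x = 1)
    (hc0 : c0 ∈ Set.Ioo (0:ℝ) 1) (hc1 : c1 ∈ Set.Ioo (0:ℝ) 1)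
    (hc : c0 + c1 = 1) :
    (∫ x, min (c0 * p0 x) (c1 * p1 x)) ≤
      1 / 2 - (1 / 2) * ∫ x, (c0 * p0 x - c1 * p1 x) ^ 2 / (c0 * p0 x + c1 * p1 x) := by
  have hf := hi0.const_mul c0
  have hg := hi1.const_mul c1
  have hmass : (∫ x, c0 * p0 x) + ∫ x, c1 * p1 x = 1 := by
    rw [integral_const_mul, integral_const_mul, h10, h11, mul_one, mul_one, hc]
  have hdiv_le_abs := integral_sq_sub_div_add_le_integral_abs_sub hf hg
    (fun x => mul_nonneg hc0.1.le (hp0 x)) (fun x => mul_nonneg hc1.1.le (hp1 x))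
  rw [integral_min_eq hf hg, hmass]
  linarith

/-- Bayes error upper bound `ε ≤ 1/2 - u_c/2` with
`u_c = ∫ (c0 p0 - c1 p1)²/(c0 p0 + c1 p1)`. -/
theorem bayes_error_upper_bound {d : ℕ} (p0 p1 : (Fin d → ℝ) → ℝ) (c0 c1 : ℝ)
    (hm0 : Measurable p0) (hm1 : Measurable p1)
    (hp0 : ∀ x, 0 ≤ p0 x) (hp1 : ∀ x, 0 ≤ p1 x)
    (hi0 : Integrable p0) (hi1 : Integrable p1)
    (h10 : ∫ x, p0 x = 1) (h11 : ∫ x, p1 x = 1)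
    (hc0 : c0 ∈ Set.Ioo (0:ℝ) 1) (hc1 : c1 ∈ Set.Ioo (0:ℝ) 1)
    (hc : c0 + c1 = 1)
    (hmin : Integrable (fun x => min (c0 * p0 x) (c1 * p1 x)))
    (hint : Integrable (fun x => (c0 * p0 x - c1 * p1 x) ^ 2 / (c0 * p0 x + c1 * p1 x))) :
    (∫ x, min (c0 * p0 x) (c1 * p1 x)) ≤
      1 / 2 - (1 / 2) * ∫ x, (c0 * p0 x - c1 * p1 x) ^ 2 / (c0 * p0 x + c1 * p1 x) :=
  bayes_error_upper_bound_general p0 p1 c0 c1 hp0 hp1 hi0 hi1 h10 h11 hc0 hc1 hc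
end

section
/- With u_c(p0,p1) = ∫ (c0 p0 - c1 p1)^2/(c0 p0 + c1 p1) dx, the Bayes error ε = ∫ min{c0 p0, c1 p1} dx satisfies the lower bound ε ≥ 1/2 - (1/2) √(u_c(p0,p1)). -/
open MeasureTheory

/-! Since `min a b = (a + b - |a - b|) / 2` and the mixture `c0 p0 + c1 p1` has mass one, the
Bayes error equals `(1 - ∫ |c0 p0 - c1 p1|) / 2`. Splitting `|c0 p0 - c1 p1|` as
`(|c0 p0 - c1 p1| / √(c0 p0 + c1 p1)) · √(c0 p0 + c1 p1)`, Cauchy–Schwarz bounds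
`∫ |c0 p0 - c1 p1|` by `√u_c · √(∫ (c0 p0 + c1 p1)) = √u_c`. -/

section

variable {α : Type*} [MeasurableSpace α] {μ : Measure α}

lemma min_eq_add_sub_abs_div_two (a b : ℝ) : min a b = (a + b - |a - b|) / 2 := by
  linarith [min_add_max a b, max_sub_min_eq_abs' a b]

lemma integral_min_eq_add_sub_abs_div_two {f g : α → ℝ} (hf : Integrable f μ)
    (hg : Integrable g μ) :
    ∫ x, min (f x) (g x) ∂μ = (∫ x, f x ∂μ + ∫ x, g x ∂μ - ∫ x, |f x - g x| ∂μ) / 2 := by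
  simp only [min_eq_add_sub_abs_div_two]
  rw [integral_div, integral_sub (by exact hf.add hg) (by exact (hf.sub hg).abs),
    integral_add hf hg]

lemma integral_mul_le_sqrt_mul_sqrt_of_nonneg {f g : α → ℝ} (hf : 0 ≤ f) (hg : 0 ≤ g)
    (hf2 : MemLp f 2 μ) (hg2 : MemLp g 2 μ) :
    ∫ x, f x * g x ∂μ ≤ √(∫ x, f x ^ 2 ∂μ) * √(∫ x, g x ^ 2 ∂μ) := by
  have key := integral_mul_le_Lp_mul_Lq_of_nonneg Real.HolderConjugate.two_two
    (.of_forall hf) (.of_forall hg) (by simpa using hf2) (by simpa using hg2)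
  simpa only [Real.rpow_two, Real.sqrt_eq_rpow, one_div] using key

lemma integral_abs_le_sqrt_integral_sq_div_mul_sqrt_integral {f g : α → ℝ} (hg : 0 ≤ g)
    (hfg : ∀ x, g x = 0 → f x = 0) (hf : AEStronglyMeasurable f μ) (hg_int : Integrable g μ)
    (hfg_int : Integrable (fun x => f x ^ 2 / g x) μ) :
    ∫ x, |f x| ∂μ ≤ √(∫ x, f x ^ 2 / g x ∂μ) * √(∫ x, g x ∂μ) := by
  have h_split : ∀ x, |f x| / √(g x) * √(g x) = |f x| := fun x => by
    rcases (hg x).eq_or_lt with h0 | hpos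
    · simp [hfg x h0.symm]
    · exact div_mul_cancel₀ _ (Real.sqrt_pos.2 hpos).ne'
  have h_sq_left : ∀ x, (|f x| / √(g x)) ^ 2 = f x ^ 2 / g x := fun x => by
    rw [div_pow, sq_abs, Real.sq_sqrt (hg x)]
  have h_sq_right : ∀ x, √(g x) ^ 2 = g x := fun x => Real.sq_sqrt (hg x)
  have hsqrt_meas : AEStronglyMeasurable (fun x => √(g x)) μ :=
    hg_int.aestronglyMeasurable.aemeasurable.sqrt.aestronglyMeasurable
  have hleft : MemLp (fun x => |f x| / √(g x)) 2 μ := by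
    rw [memLp_two_iff_integrable_sq (f := fun x => |f x| / √(g x))
      (hf.aemeasurable.abs.div hsqrt_meas.aemeasurable).aestronglyMeasurable]
    simpa only [h_sq_left] using hfg_int
  have hright : MemLp (fun x => √(g x)) 2 μ := by
    rw [memLp_two_iff_integrable_sq hsqrt_meas]
    simpa only [h_sq_right] using hg_int
  have := integral_mul_le_sqrt_mul_sqrt_of_nonneg (fun x => by positivity)
    (fun x => Real.sqrt_nonneg _) hleft hright
  simpa only [h_split, h_sq_left, h_sq_right] using this

end

theorem bayes_error_lower_bound_general {d : ℕ} (p0 p1 : (Fin d → ℝ) → ℝ) (c0 c1 : ℝ)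
    (hp0 : ∀ x, 0 ≤ p0 x) (hp1 : ∀ x, 0 ≤ p1 x)
    (hi0 : Integrable p0) (hi1 : Integrable p1)
    (h10 : ∫ x, p0 x = 1) (h11 : ∫ x, p1 x = 1)
    (hc0 : c0 ∈ Set.Ioo (0:ℝ) 1) (hc1 : c1 ∈ Set.Ioo (0:ℝ) 1)
    (hc : c0 + c1 = 1)
    (hint : Integrable (fun x => (c0 * p0 x - c1 * p1 x) ^ 2 / (c0 * p0 x + c1 * p1 x))) :
    1 / 2 - (1 / 2) * Real.sqrt (∫ x, (c0 * p0 x - c1 * p1 x) ^ 2 / (c0 * p0 x + c1 * p1 x))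
      ≤ ∫ x, min (c0 * p0 x) (c1 * p1 x) := by
  have ha : Integrable (fun x => c0 * p0 x) := hi0.const_mul c0
  have hb : Integrable (fun x => c1 * p1 x) := hi1.const_mul c1
  have ha_nonneg : ∀ x, 0 ≤ c0 * p0 x := fun x => mul_nonneg hc0.1.le (hp0 x)
  have hb_nonneg : ∀ x, 0 ≤ c1 * p1 x := fun x => mul_nonneg hc1.1.le (hp1 x)
  have hmass_sum : (∫ x, c0 * p0 x) + ∫ x, c1 * p1 x = 1 := by
    rw [integral_const_mul, integral_const_mul, h10, h11, mul_one, mul_one, hc]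
  have hmass : ∫ x, (c0 * p0 x + c1 * p1 x) = 1 := by rw [integral_add ha hb, hmass_sum]
  have hcs := integral_abs_le_sqrt_integral_sq_div_mul_sqrt_integral
    (f := fun x => c0 * p0 x - c1 * p1 x) (fun x => add_nonneg (ha_nonneg x) (hb_nonneg x))
    (fun x hx => by linarith [ha_nonneg x, hb_nonneg x]) (ha.sub hb).aestronglyMeasurable
    (ha.add hb) hint
  rw [hmass, Real.sqrt_one, mul_one] at hcs
  rw [integral_min_eq_add_sub_abs_div_two ha hb]
  linarith

/-- Bayes error lower bound `ε ≥ 1/2 - (1/2)√(u_c)` with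
`u_c = ∫ (c0 p0 - c1 p1)²/(c0 p0 + c1 p1)`. -/
theorem bayes_error_lower_bound {d : ℕ} (p0 p1 : (Fin d → ℝ) → ℝ) (c0 c1 : ℝ)
    (hm0 : Measurable p0) (hm1 : Measurable p1)
    (hp0 : ∀ x, 0 ≤ p0 x) (hp1 : ∀ x, 0 ≤ p1 x)
    (hi0 : Integrable p0) (hi1 : Integrable p1)
    (h10 : ∫ x, p0 x = 1) (h11 : ∫ x, p1 x = 1)
    (hc0 : c0 ∈ Set.Ioo (0:ℝ) 1) (hc1 : c1 ∈ Set.Ioo (0:ℝ) 1)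
    (hc : c0 + c1 = 1)
    (hmin : Integrable (fun x => min (c0 * p0 x) (c1 * p1 x)))
    (hint : Integrable (fun x => (c0 * p0 x - c1 * p1 x) ^ 2 / (c0 * p0 x + c1 * p1 x))) :
    1 / 2 - (1 / 2) * Real.sqrt (∫ x, (c0 * p0 x - c1 * p1 x) ^ 2 / (c0 * p0 x + c1 * p1 x))
      ≤ ∫ x, min (c0 * p0 x) (c1 * p1 x) :=
  bayes_error_lower_bound_general p0 p1 c0 c1 hp0 hp1 hi0 hi1 h10 h11 hc0 hc1 hc hint
end

section
/- Chain of bounds: for probability densities p0, p1 and priors c0, c1 with c0+c1=1, letting u = ∫ (c0 p0 - c1 p1)^2/(c0 p0 + c1 p1) dx, one has (c0-c1)^2 ≤ u ≤ 1, hence 0 ≤ 1/2 - (1/2)√u ≤ 1/2 - (1/2)u ≤ 2 c0 c1. -/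
open MeasureTheory

/-!
Put `f = c0 p0 - c1 p1` and `g = c0 p0 + c1 p1`, so that `|f| ≤ g`, `∫ f = c0 - c1` and
`∫ g = 1`.
Pointwise `f² / g ≤ g`, which gives `u ≤ 1`, and `f² / g ≥ 2 t f - t² g` for every real `t`
(tangent line of the convex map `f ↦ f² / g`); integrating the latter with `t = ∫ f` gives
`(c0 - c1)² ≤ u`. The remaining bounds are arithmetic: `u ≤ √u ≤ 1` on `[0, 1]`, and
`1 - (c0 - c1)² = 4 c0 c1` because `c0 + c1 = 1`.
-/

section Pointwise

variable {f g : ℝ}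

lemma sq_div_le_of_abs_le (h : |f| ≤ g) : f ^ 2 / g ≤ g := by
  rcases (abs_nonneg f).trans h |>.eq_or_lt with hg | hg
  · simp [← hg]
  · rw [div_le_iff₀ hg, ← sq_abs, sq]
    exact mul_le_mul h h (abs_nonneg f) hg.le

lemma two_mul_mul_sub_sq_mul_le_sq_div (h : |f| ≤ g) (t : ℝ) :
    2 * t * f - t ^ 2 * g ≤ f ^ 2 / g := by
  rcases (abs_nonneg f).trans h |>.eq_or_lt with hg | hg
  · have hf : f = 0 := abs_eq_zero.1 (le_antisymm (hg ▸ h) (abs_nonneg f))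
    simp [hf, ← hg]
  · rw [le_div_iff₀ hg]
    nlinarith [sq_nonneg (f - t * g)]

end Pointwise

section Integral

variable {α : Type*} [MeasurableSpace α] {μ : Measure α} {f g : α → ℝ}

lemma integral_sq_div_le_integral (hg : Integrable g μ) (hfg : ∀ᵐ x ∂μ, |f x| ≤ g x)
    (hint : Integrable (fun x ↦ f x ^ 2 / g x) μ) :
    ∫ x, f x ^ 2 / g x ∂μ ≤ ∫ x, g x ∂μ :=
  integral_mono_ae hint hg (hfg.mono fun _ ↦ sq_div_le_of_abs_le)

/-- Integral form of Sedrakyan's inequality. -/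
lemma sq_integral_div_integral_le_integral_sq_div (hf : Integrable f μ) (hg : Integrable g μ)
    (hfg : ∀ᵐ x ∂μ, |f x| ≤ g x) (hint : Integrable (fun x ↦ f x ^ 2 / g x) μ) :
    (∫ x, f x ∂μ) ^ 2 / ∫ x, g x ∂μ ≤ ∫ x, f x ^ 2 / g x ∂μ := by
  set F := ∫ x, f x ∂μ
  set G := ∫ x, g x ∂μ
  set t := F / G
  have htangent : ∫ x, (2 * t * f x - t ^ 2 * g x) ∂μ ≤ ∫ x, f x ^ 2 / g x ∂μ :=
    integral_mono_ae ((hf.const_mul _).sub (hg.const_mul _)) hint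
      (hfg.mono fun x hx ↦ two_mul_mul_sub_sq_mul_le_sq_div hx t)
  have hvalue : 2 * t * F - t ^ 2 * G = F ^ 2 / G := by
    rcases eq_or_ne G 0 with hG | hG
    · simp [t, hG]
    · simp only [t]; field_simp; ring
  rw [integral_sub (hf.const_mul _) (hg.const_mul _), integral_const_mul, integral_const_mul,
    hvalue] at htangent
  exact htangent

end Integral

lemma sqrt_chain_of_sq_le_of_le_one {c0 c1 u : ℝ} (hc : c0 + c1 = 1)
    (hlow : (c0 - c1) ^ 2 ≤ u) (hup : u ≤ 1) :
    0 ≤ 1 / 2 - (1 / 2) * Real.sqrt u ∧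
    1 / 2 - (1 / 2) * Real.sqrt u ≤ 1 / 2 - (1 / 2) * u ∧
    1 / 2 - (1 / 2) * u ≤ 2 * c0 * c1 := by
  have hsqrt_le_one : Real.sqrt u ≤ 1 := Real.sqrt_le_one.2 hup
  have hle_sqrt : u ≤ Real.sqrt u := Real.le_sqrt_self_iff.2 hup
  have hprior : (c0 - c1) ^ 2 = 1 - 4 * c0 * c1 := by
    linear_combination (c0 + c1 + 1) * hc
  refine ⟨by linarith, by linarith, by nlinarith⟩

theorem hp_chain_of_bounds_general {d : ℕ} (p0 p1 : (Fin d → ℝ) → ℝ) (c0 c1 : ℝ)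
    (hp0 : ∀ x, 0 ≤ p0 x) (hp1 : ∀ x, 0 ≤ p1 x)
    (hi0 : Integrable p0) (hi1 : Integrable p1)
    (h10 : ∫ x, p0 x = 1) (h11 : ∫ x, p1 x = 1)
    (hc0 : c0 ∈ Set.Ioo (0:ℝ) 1) (hc1 : c1 ∈ Set.Ioo (0:ℝ) 1)
    (hc : c0 + c1 = 1)
    (hint : Integrable (fun x => (c0 * p0 x - c1 * p1 x) ^ 2 / (c0 * p0 x + c1 * p1 x))) :
    (c0 - c1) ^ 2 ≤ (∫ x, (c0 * p0 x - c1 * p1 x) ^ 2 / (c0 * p0 x + c1 * p1 x)) ∧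
    (∫ x, (c0 * p0 x - c1 * p1 x) ^ 2 / (c0 * p0 x + c1 * p1 x)) ≤ 1 ∧
    0 ≤ 1 / 2 - (1 / 2) * Real.sqrt (∫ x, (c0 * p0 x - c1 * p1 x) ^ 2 / (c0 * p0 x + c1 * p1 x)) ∧
    1 / 2 - (1 / 2) * Real.sqrt (∫ x, (c0 * p0 x - c1 * p1 x) ^ 2 / (c0 * p0 x + c1 * p1 x)) ≤
      1 / 2 - (1 / 2) * (∫ x, (c0 * p0 x - c1 * p1 x) ^ 2 / (c0 * p0 x + c1 * p1 x)) ∧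
    1 / 2 - (1 / 2) * (∫ x, (c0 * p0 x - c1 * p1 x) ^ 2 / (c0 * p0 x + c1 * p1 x)) ≤
      2 * c0 * c1 := by
  have hf : Integrable (fun x ↦ c0 * p0 x - c1 * p1 x) :=
    (hi0.const_mul c0).sub (hi1.const_mul c1)
  have hg : Integrable (fun x ↦ c0 * p0 x + c1 * p1 x) :=
    (hi0.const_mul c0).add (hi1.const_mul c1)
  have hfg : ∀ᵐ x, |c0 * p0 x - c1 * p1 x| ≤ c0 * p0 x + c1 * p1 x :=
    .of_forall fun x ↦ abs_sub_le_iff.2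
      ⟨by nlinarith [hp1 x, hc1.1], by nlinarith [hp0 x, hc0.1]⟩
  have hintegral_f : ∫ x, (c0 * p0 x - c1 * p1 x) = c0 - c1 := by
    rw [integral_sub (hi0.const_mul c0) (hi1.const_mul c1), integral_const_mul,
      integral_const_mul, h10, h11, mul_one, mul_one]
  have hintegral_g : ∫ x, (c0 * p0 x + c1 * p1 x) = 1 := by
    rw [integral_add (hi0.const_mul c0) (hi1.const_mul c1), integral_const_mul,
      integral_const_mul, h10, h11, mul_one, mul_one, hc]
  have hlow := sq_integral_div_integral_le_integral_sq_div hf hg hfg hint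
  have hup := integral_sq_div_le_integral hg hfg hint
  rw [hintegral_f, hintegral_g, div_one] at hlow
  rw [hintegral_g] at hup
  exact ⟨hlow, hup, sqrt_chain_of_sq_le_of_le_one hc hlow hup⟩

/-- Chain of bounds for `u = ∫ (c0 p0 - c1 p1)²/(c0 p0 + c1 p1)`:
`(c0-c1)² ≤ u ≤ 1`, hence `0 ≤ 1/2 - √u/2 ≤ 1/2 - u/2 ≤ 2 c0 c1`. -/
theorem hp_chain_of_bounds {d : ℕ} (p0 p1 : (Fin d → ℝ) → ℝ) (c0 c1 : ℝ)
    (hm0 : Measurable p0) (hm1 : Measurable p1)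
    (hp0 : ∀ x, 0 ≤ p0 x) (hp1 : ∀ x, 0 ≤ p1 x)
    (hi0 : Integrable p0) (hi1 : Integrable p1)
    (h10 : ∫ x, p0 x = 1) (h11 : ∫ x, p1 x = 1)
    (hc0 : c0 ∈ Set.Ioo (0:ℝ) 1) (hc1 : c1 ∈ Set.Ioo (0:ℝ) 1)
    (hc : c0 + c1 = 1)
    (hint : Integrable (fun x => (c0 * p0 x - c1 * p1 x) ^ 2 / (c0 * p0 x + c1 * p1 x))) :
    (c0 - c1) ^ 2 ≤ (∫ x, (c0 * p0 x - c1 * p1 x) ^ 2 / (c0 * p0 x + c1 * p1 x)) ∧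
    (∫ x, (c0 * p0 x - c1 * p1 x) ^ 2 / (c0 * p0 x + c1 * p1 x)) ≤ 1 ∧
    0 ≤ 1 / 2 - (1 / 2) * Real.sqrt (∫ x, (c0 * p0 x - c1 * p1 x) ^ 2 / (c0 * p0 x + c1 * p1 x)) ∧
    1 / 2 - (1 / 2) * Real.sqrt (∫ x, (c0 * p0 x - c1 * p1 x) ^ 2 / (c0 * p0 x + c1 * p1 x)) ≤
      1 / 2 - (1 / 2) * (∫ x, (c0 * p0 x - c1 * p1 x) ^ 2 / (c0 * p0 x + c1 * p1 x)) ∧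
    1 / 2 - (1 / 2) * (∫ x, (c0 * p0 x - c1 * p1 x) ^ 2 / (c0 * p0 x + c1 * p1 x)) ≤
      2 * c0 * c1 :=
  hp_chain_of_bounds_general p0 p1 c0 c1 hp0 hp1 hi0 hi1 h10 h11 hc0 hc1 hc hint
end

section
/- Under a uniformly random labeling of N = m+n points, the variance of the cross-match statistic of a fixed perfect matching is Var[A] = 2 n (n-1) m (m-1) / ((N-3)(N-1)^2). -/
/-!
Count each crossing edge at its endpoint in `s`, so that `A(s) = #{v | v ∈ s ∧ f v ∉ s}`.
Exchanging sums turns `∑ₛ A(s)` and `∑ₛ A(s)²` into sums over vertices, resp. pairs of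
vertices, of numbers of `m`-sets that contain some prescribed points and avoid others. Such a
number depends only on how many points are prescribed: a uniform `m`-subset of an `N`-set
contains a fixed `i`-set and avoids a disjoint fixed `j`-set with probability
`m^(i) (N - m)^(j) / N^(i + j)` (falling factorials). In the square, the pair `(v, v)`
reproduces the first moment, `(v, f v)` contributes nothing, and the `N - 2` remaining `w` give
two disjoint edges crossing, with probability `m(m-1) n(n-1) / N(N-1)(N-2)(N-3)`.
-/

open Finset

theorem choose_mul_descFactorial_add (a b i j : ℕ) :
    (a + b).choose a * (a + b + (i + j)).descFactorial (i + j)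
      = (a + i + (b + j)).choose (a + i) * (a + i).descFactorial i * (b + j).descFactorial j := by
  have key (n k : ℕ) : n.factorial * (n + k).descFactorial k = (n + k).factorial := by
    simpa using Nat.factorial_mul_descFactorial (Nat.le_add_left k n)
  have split (p q : ℕ) : (p + q).choose p * p.factorial * q.factorial = (p + q).factorial := by
    rw [Nat.choose_symm_add]; exact Nat.add_choose_mul_factorial_mul_factorial p q
  apply Nat.eq_of_mul_eq_mul_right (mul_pos a.factorial_pos b.factorial_pos)
  calc (a + b).choose a * (a + b + (i + j)).descFactorial (i + j) * (a.factorial * b.factorial)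
      = (a + b).choose a * a.factorial * b.factorial * (a + b + (i + j)).descFactorial (i + j) := by
        ring
    _ = (a + i + (b + j)).factorial := by
      rw [split, key, add_add_add_comm]
    _ = (a + i + (b + j)).choose (a + i) * (a.factorial * (a + i).descFactorial i)
          * (b.factorial * (b + j).descFactorial j) := by
      rw [key, key, split]
    _ = _ := by ring

section

variable {α : Type*} [Fintype α] [DecidableEq α]

theorem card_filter_subset_disjoint {X Y : Finset α} (hXY : Disjoint X Y) {m : ℕ}
    (hm : #X ≤ m) :
    #{s ∈ powersetCard m univ | X ⊆ s ∧ Disjoint Y s}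
      = (Fintype.card α - #X - #Y).choose (m - #X) := by
  have hcompl : #((univ \ X) \ Y) = Fintype.card α - #X - #Y := by
    rw [card_sdiff_of_subset, card_sdiff_of_subset (subset_univ X), card_univ]
    exact fun y hy => mem_sdiff.2 ⟨mem_univ y, disjoint_right.1 hXY hy⟩
  rw [← hcompl, ← card_powersetCard]
  refine card_nbij' (· \ X) (· ∪ X) ?_ ?_ ?_ ?_ <;> intro s hs <;>
    simp only [mem_coe, mem_filter, mem_powersetCard, subset_univ, true_and] at hs ⊢
  · obtain ⟨hcard, hXs, hYs⟩ := hs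
    refine ⟨fun x hx => ?_, by rw [card_sdiff_of_subset hXs, hcard]⟩
    simp only [mem_sdiff, mem_univ, true_and] at hx ⊢
    exact ⟨hx.2, fun hy => disjoint_left.1 hYs hy hx.1⟩
  · obtain ⟨hsub, hcard⟩ := hs
    have hsX : Disjoint s X := disjoint_left.2 fun x hx => (mem_sdiff.1 (mem_sdiff.1 (hsub hx)).1).2
    refine ⟨by rw [card_union_of_disjoint hsX, hcard]; omega, subset_union_right, ?_⟩
    rw [disjoint_union_right]
    exact ⟨disjoint_left.2 fun y hy hx => (mem_sdiff.1 (hsub hx)).2 hy, hXY.symm⟩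
  · exact sdiff_union_of_subset hs.2.1
  · exact union_sdiff_cancel_right
      (disjoint_left.2 fun x hx => (mem_sdiff.1 (mem_sdiff.1 (hs.1 hx)).1).2)

theorem card_filter_subset_disjoint_mul_descFactorial {X Y : Finset α} (hXY : Disjoint X Y)
    (m : ℕ) :
    #{s ∈ powersetCard m univ | X ⊆ s ∧ Disjoint Y s}
        * (Fintype.card α).descFactorial (#X + #Y)
      = (Fintype.card α).choose m * m.descFactorial #X
          * (Fintype.card α - m).descFactorial #Y := by
  by_cases hm : #X ≤ m ∧ #Y + m ≤ Fintype.card α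
  · obtain ⟨a, rfl⟩ : ∃ a, m = a + #X := ⟨m - #X, by omega⟩
    obtain ⟨b, hN⟩ : ∃ b, Fintype.card α = a + #X + (b + #Y) :=
      ⟨Fintype.card α - (a + #X) - #Y, by omega⟩
    rw [card_filter_subset_disjoint hXY hm.1, hN, Nat.add_sub_cancel,
      show a + #X + (b + #Y) - #X - #Y = a + b by omega,
      show a + #X + (b + #Y) - (a + #X) = b + #Y by omega,
      ← choose_mul_descFactorial_add, add_add_add_comm]
  · have hempty : {s ∈ powersetCard m (univ : Finset α) | X ⊆ s ∧ Disjoint Y s} = ∅ := by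
      refine filter_eq_empty_iff.2 fun s hs ⟨hXs, hYs⟩ => hm ⟨?_, ?_⟩
      · rw [← mem_powersetCard_univ.1 hs]
        exact card_le_card hXs
      · rw [← mem_powersetCard_univ.1 hs, ← card_union_of_disjoint hYs]
        exact card_le_univ _
    rw [hempty, card_empty, zero_mul, eq_comm]
    simp only [mul_eq_zero, Nat.choose_eq_zero_iff, Nat.descFactorial_eq_zero_iff_lt]
    omega

/-- The probability that a uniformly random `m`-subset of an `N`-set contains a given `i`-set and
avoids a given disjoint `j`-set. -/
noncomputable def containAvoidProb (N m i j : ℕ) : ℝ :=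
  (m.descFactorial i * (N - m).descFactorial j : ℝ) / N.descFactorial (i + j)

theorem containAvoidProb_one_one (m n : ℕ) :
    containAvoidProb (m + n) m 1 1 = m * n / ((m + n) * (m + n - 1)) := by
  simp only [containAvoidProb, Nat.add_sub_cancel_left, Nat.reduceAdd, Nat.descFactorial_one,
    Nat.cast_descFactorial_two, Nat.cast_add]

theorem containAvoidProb_two_two (m n : ℕ) :
    containAvoidProb (m + n) m 2 2
      = m * (m - 1) * (n * (n - 1)) / ((m + n) * (m + n - 1) * (m + n - 2) * (m + n - 3)) := by
  simp only [containAvoidProb, Nat.add_sub_cancel_left, ← descPochhammer_eval_eq_descFactorial]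
  simp [descPochhammer_succ_right]

theorem cast_card_filter_subset_disjoint {X Y : Finset α} (hXY : Disjoint X Y) (m : ℕ) :
    (#{s ∈ powersetCard m univ | X ⊆ s ∧ Disjoint Y s} : ℝ)
      = (Fintype.card α).choose m * containAvoidProb (Fintype.card α) m #X #Y := by
  have hXY_le : #X + #Y ≤ Fintype.card α := card_union_of_disjoint hXY ▸ card_le_univ _
  have hpos : ((Fintype.card α).descFactorial (#X + #Y) : ℝ) ≠ 0 := by
    exact_mod_cast (Nat.descFactorial_pos.2 hXY_le).ne'
  rw [containAvoidProb, mul_div_assoc', eq_div_iff hpos, ← mul_assoc]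
  exact_mod_cast card_filter_subset_disjoint_mul_descFactorial hXY m

theorem cast_card_filter_mem_not_mem {v w : α} (hvw : v ≠ w) (m : ℕ) :
    (#{s ∈ powersetCard m univ | v ∈ s ∧ w ∉ s} : ℝ)
      = (Fintype.card α).choose m * containAvoidProb (Fintype.card α) m 1 1 := by
  simpa only [singleton_subset_iff, disjoint_singleton_left, card_singleton] using
    cast_card_filter_subset_disjoint (disjoint_singleton.2 hvw) m

end

theorem sum_card_filter_sq {β γ : Type*} [Fintype γ] (S : Finset β) (P : β → γ → Prop)
    [∀ s v, Decidable (P s v)] :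
    ∑ s ∈ S, #{v | P s v} ^ 2 = ∑ v, ∑ w, #{s ∈ S | P s v ∧ P s w} := by
  calc ∑ s ∈ S, #{v | P s v} ^ 2
      = ∑ s ∈ S, #{vw : γ × γ | P s vw.1 ∧ P s vw.2} := by
        refine sum_congr rfl fun s _ => ?_
        rw [sq, ← card_product, ← filter_product, univ_product_univ]
    _ = ∑ vw : γ × γ, #{s ∈ S | P s vw.1 ∧ P s vw.2} :=
        sum_card_bipartiteAbove_eq_sum_card_bipartiteBelow _
    _ = _ := Fintype.sum_prod_type _

section Matching

variable {V : Type*} [Fintype V] [DecidableEq V]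

theorem card_filter_xor_eq_two_mul {f : V → V} (hf : Function.Involutive f) (s : Finset V) :
    #{v | Xor (v ∈ s) (f v ∈ s)} = 2 * #{v | v ∈ s ∧ f v ∉ s} := by
  have hsplit : ({v | Xor (v ∈ s) (f v ∈ s)} : Finset V)
      = ({v | v ∈ s ∧ f v ∉ s} : Finset V) ∪ ({v | f v ∈ s ∧ v ∉ s} : Finset V) := by
    rw [← filter_or]
    exact filter_congr fun v _ => by simp only [Xor]
  have hdisj :
      Disjoint ({v | v ∈ s ∧ f v ∉ s} : Finset V) ({v | f v ∈ s ∧ v ∉ s} : Finset V) :=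
    disjoint_filter.2 fun _ _ h h' => h'.2 h.1
  have hswap : #({v | f v ∈ s ∧ v ∉ s} : Finset V) = #{v | v ∈ s ∧ f v ∉ s} := by
    refine card_nbij' f f ?_ ?_ (fun v _ => hf v) (fun v _ => hf v) <;>
      intro v hv <;> simpa [hf v] using hv
  rw [hsplit, card_union_of_disjoint hdisj, hswap, two_mul]

theorem sum_card_filter_crossing_pair {f : V → V} (hf : Function.Involutive f)
    (hne : ∀ v, f v ≠ v) (m : ℕ) (v : V) :
    ∑ w, (#{s ∈ powersetCard m (univ : Finset V) |
        (v ∈ s ∧ f v ∉ s) ∧ (w ∈ s ∧ f w ∉ s)} : ℝ)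
      = (Fintype.card V).choose m * (containAvoidProb (Fintype.card V) m 1 1
          + (Fintype.card V - 2) * containAvoidProb (Fintype.card V) m 2 2) := by
  have hfv : f v ∈ univ.erase v := mem_erase.2 ⟨hne v, mem_univ _⟩
  rw [← add_sum_erase _ _ (mem_univ v), ← add_sum_erase _ _ hfv]
  have hdiag : (#{s ∈ powersetCard m (univ : Finset V) |
      (v ∈ s ∧ f v ∉ s) ∧ (v ∈ s ∧ f v ∉ s)} : ℝ)
        = (Fintype.card V).choose m * containAvoidProb (Fintype.card V) m 1 1 := by
    simp only [and_self]
    exact cast_card_filter_mem_not_mem (hne v).symm m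
  have hpartner : (#{s ∈ powersetCard m (univ : Finset V) |
      (v ∈ s ∧ f v ∉ s) ∧ (f v ∈ s ∧ f (f v) ∉ s)} : ℝ) = 0 := by
    simp only [Nat.cast_eq_zero, card_eq_zero, filter_eq_empty_iff]
    exact fun s _ h => h.1.2 h.2.1
  have hrest : ∀ w ∈ (univ.erase v).erase (f v),
      (#{s ∈ powersetCard m (univ : Finset V) |
          (v ∈ s ∧ f v ∉ s) ∧ (w ∈ s ∧ f w ∉ s)} : ℝ)
        = (Fintype.card V).choose m * containAvoidProb (Fintype.card V) m 2 2 := by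
    intro w hw
    obtain ⟨hwfv, hwv⟩ : w ≠ f v ∧ w ≠ v := by simpa using hw
    have hvfw : v ≠ f w := fun h => hwfv (by rw [h, hf w])
    have hdisj : Disjoint ({v, w} : Finset V) {f v, f w} := by
      simp [hne v, hne w, hvfw.symm, hwfv.symm]
    have h := cast_card_filter_subset_disjoint hdisj m
    rw [card_pair hwv.symm, card_pair (hf.injective.ne hwv.symm)] at h
    rw [← h]
    congr 2
    refine filter_congr fun s _ => ?_
    simp only [insert_subset_iff, singleton_subset_iff, disjoint_insert_left,
      disjoint_singleton_left]
    tauto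
  have hcard : (#((univ.erase v).erase (f v)) : ℝ) = Fintype.card V - 2 := by
    rw [eq_sub_iff_add_eq, ← card_univ, ← card_erase_add_one (mem_univ v),
      ← card_erase_add_one hfv]
    push_cast
    ring
  rw [hdiag, hpartner, sum_congr rfl hrest, sum_const, nsmul_eq_mul, hcard]
  ring

theorem sum_card_crossing {f : V → V} (hne : ∀ v, f v ≠ v) (m : ℕ) :
    ∑ s ∈ powersetCard m (univ : Finset V), (#{v | v ∈ s ∧ f v ∉ s} : ℝ)
      = Fintype.card V * ((Fintype.card V).choose m * containAvoidProb (Fintype.card V) m 1 1) :=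
  calc ∑ s ∈ powersetCard m (univ : Finset V), (#{v | v ∈ s ∧ f v ∉ s} : ℝ)
      = ∑ v, (#{s ∈ powersetCard m (univ : Finset V) | v ∈ s ∧ f v ∉ s} : ℝ) := by
        exact_mod_cast sum_card_bipartiteAbove_eq_sum_card_bipartiteBelow _
    _ = _ := by
        rw [sum_congr rfl fun v _ => cast_card_filter_mem_not_mem (hne v).symm m, sum_const,
          card_univ, nsmul_eq_mul]

theorem sum_card_crossing_sq {f : V → V} (hf : Function.Involutive f) (hne : ∀ v, f v ≠ v)
    (m : ℕ) :
    ∑ s ∈ powersetCard m (univ : Finset V), (#{v | v ∈ s ∧ f v ∉ s} : ℝ) ^ 2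
      = Fintype.card V * ((Fintype.card V).choose m * (containAvoidProb (Fintype.card V) m 1 1
          + (Fintype.card V - 2) * containAvoidProb (Fintype.card V) m 2 2)) :=
  calc ∑ s ∈ powersetCard m (univ : Finset V), (#{v | v ∈ s ∧ f v ∉ s} : ℝ) ^ 2
      = ∑ v, ∑ w, (#{s ∈ powersetCard m (univ : Finset V) |
          (v ∈ s ∧ f v ∉ s) ∧ (w ∈ s ∧ f w ∉ s)} : ℝ) := by
        exact_mod_cast sum_card_filter_sq _ fun (s : Finset V) v => v ∈ s ∧ f v ∉ s
    _ = _ := by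
        rw [sum_congr rfl fun v _ => sum_card_filter_crossing_pair hf hne m v, sum_const,
          card_univ, nsmul_eq_mul]

end Matching

theorem crossmatch_variance_general {V : Type*} [Fintype V] [DecidableEq V]
    (f : V → V) (hinv : ∀ v, f (f v) = v) (hne : ∀ v, f v ≠ v)
    (m n N : ℕ) (hN : N = Fintype.card V) (hmn : m + n = N)
    (hN4 : 4 ≤ N) :
    (∑ s ∈ Finset.univ.filter (fun s : Finset V => s.card = m),
        (((Finset.univ.filter fun v => Xor (v ∈ s) (f v ∈ s)).card / 2 : ℕ) : ℝ) ^ 2)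
      / (Finset.univ.filter (fun s : Finset V => s.card = m)).card
    - ((∑ s ∈ Finset.univ.filter (fun s : Finset V => s.card = m),
        (((Finset.univ.filter fun v => Xor (v ∈ s) (f v ∈ s)).card / 2 : ℕ) : ℝ))
      / (Finset.univ.filter (fun s : Finset V => s.card = m)).card) ^ 2
      = 2 * n * ((n : ℝ) - 1) * m * ((m : ℝ) - 1) / (((N : ℝ) - 3) * ((N : ℝ) - 1) ^ 2) := by
  subst hN
  have hcross (s : Finset V) :
      #{v | Xor (v ∈ s) (f v ∈ s)} / 2 = #{v | v ∈ s ∧ f v ∉ s} := by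
    rw [card_filter_xor_eq_two_mul hinv, Nat.mul_div_cancel_left _ two_pos]
  simp only [hcross, univ_filter_card_eq]
  rw [sum_card_crossing hne, sum_card_crossing_sq hinv hne, card_powersetCard, card_univ, ← hmn,
    containAvoidProb_one_one, containAvoidProb_two_two]
  have hC : ((m + n).choose m : ℝ) ≠ 0 := by exact_mod_cast (Nat.choose_pos (by omega)).ne'
  have hN4 : (4 : ℝ) ≤ m + n := by exact_mod_cast hmn ▸ hN4
  have h1 : (m + n - 1 : ℝ) ≠ 0 := by linarith
  have h2 : (m + n - 2 : ℝ) ≠ 0 := by linarith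
  have h3 : (m + n - 3 : ℝ) ≠ 0 := by linarith
  push_cast
  field_simp
  ring

/-- Under a uniformly random labeling of `N = m + n` points (`N ≥ 4` even),
the variance of the cross-match statistic of a fixed perfect matching (fixed-point-free
involution `f`) is `Var[A] = 2 n (n-1) m (m-1) / ((N-3)(N-1)²)`. -/
theorem crossmatch_variance {V : Type*} [Fintype V] [DecidableEq V]
    (f : V → V) (hinv : ∀ v, f (f v) = v) (hne : ∀ v, f v ≠ v)
    (m n N : ℕ) (hN : N = Fintype.card V) (hmn : m + n = N)
    (hN4 : 4 ≤ N) (hNeven : Even N) :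
    (∑ s ∈ Finset.univ.filter (fun s : Finset V => s.card = m),
        (((Finset.univ.filter fun v => Xor (v ∈ s) (f v ∈ s)).card / 2 : ℕ) : ℝ) ^ 2)
      / (Finset.univ.filter (fun s : Finset V => s.card = m)).card
    - ((∑ s ∈ Finset.univ.filter (fun s : Finset V => s.card = m),
        (((Finset.univ.filter fun v => Xor (v ∈ s) (f v ∈ s)).card / 2 : ℕ) : ℝ))
      / (Finset.univ.filter (fun s : Finset V => s.card = m)).card) ^ 2
      = 2 * n * ((n : ℝ) - 1) * m * ((m : ℝ) - 1) / (((N : ℝ) - 3) * ((N : ℝ) - 1) ^ 2) :=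
  crossmatch_variance_general f hinv hne m n N hN hmn hN4
end

section
/- If the cross-match statistic satisfies the stability property |A(S ∪ {s,t}) - A(S)| ≤ k for all finite point sets S and pairs {s,t}, then for Poissonized sample sizes M ~ Poisson(m), N ~ Poisson(n), the Poissonized and fixed-sample cross-match statistics satisfy |A'_{m,n} - A_{m,n}| ≤ k(|M - m| + |N - n|), and hence (m+n)^{-1} E|A'_{m,n} - A_{m,n}| → 0 as m, n → ∞. -/
/-!
Adding a single point changes `A` by at most `k` (take `s = t` in the stability hypothesis), so
`A` evaluated on the first `M` label-1 and first `N` label-0 points is `k`-Lipschitz in `(M, N)`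
for the `ℓ¹` distance. Hence
`E|A'_{m,n} - A_{m,n}| ≤ k (E|M - m| + E|N - n|) ≤ k (√m + √n)`, because a Poisson(`r`)
variable `X` has variance `r` and `E|X - r| ≤ √(Var X)`. Divided by `m + n` this is at most
`2k / √(m + n) → 0`.
-/

open Filter ProbabilityTheory
open scoped NNReal

set_option linter.deprecated false

lemma abs_sub_le_mul_abs_sub_of_abs_succ_sub_le {g : ℕ → ℝ} {k : ℝ}
    (h : ∀ i, |g (i + 1) - g i| ≤ k) (a b : ℕ) : |g a - g b| ≤ k * |(a : ℝ) - b| := by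
  wlog hba : b ≤ a generalizing a b
  · rw [abs_sub_comm, abs_sub_comm (a : ℝ)]
    exact this b a (le_of_not_ge hba)
  have := dist_le_Ico_sum_of_dist_le (f := g) hba (d := fun _ => k) fun _ _ => by
    rw [Real.dist_eq, abs_sub_comm]
    exact h _
  rw [Finset.sum_const, Nat.card_Ico, nsmul_eq_mul, Nat.cast_sub hba, Real.dist_eq,
    abs_sub_comm] at this
  rwa [abs_of_nonneg (sub_nonneg.mpr (Nat.cast_le.mpr hba)), mul_comm]

section LabeledSample

variable {E : Type*} [DecidableEq E] (X1 X0 : ℕ → E)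

/-- `A_{M,N}` of the paper is `A (labeledSample X1 X0 M N)`; label 1 is `true`. -/
def labeledSample (M N : ℕ) : Finset (E × Bool) :=
  ((Finset.range M).image fun l => (X1 l, true)) ∪ ((Finset.range N).image fun l => (X0 l, false))

lemma labeledSample_succ_left (M N : ℕ) :
    labeledSample X1 X0 (M + 1) N = labeledSample X1 X0 M N ∪ {(X1 M, true)} := by
  simp only [labeledSample, Finset.range_add_one, Finset.image_insert]
  ext; simp only [Finset.mem_union, Finset.mem_insert, Finset.mem_singleton]; tauto

lemma labeledSample_succ_right (M N : ℕ) :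
    labeledSample X1 X0 M (N + 1) = labeledSample X1 X0 M N ∪ {(X0 N, false)} := by
  simp only [labeledSample, Finset.range_add_one, Finset.image_insert]
  ext; simp only [Finset.mem_union, Finset.mem_insert, Finset.mem_singleton]; tauto

lemma abs_sub_labeledSample_le {f : Finset (E × Bool) → ℝ} {k : ℝ}
    (hf : ∀ S s, |f (S ∪ {s}) - f S| ≤ k) (M N i j : ℕ) :
    |f (labeledSample X1 X0 M N) - f (labeledSample X1 X0 i j)| ≤
      k * (|(M : ℝ) - i| + |(N : ℝ) - j|) := by
  have h1 := abs_sub_le_mul_abs_sub_of_abs_succ_sub_le (g := fun a => f (labeledSample X1 X0 a N))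
    (fun a => by simpa only [labeledSample_succ_left] using hf _ _) M i
  have h0 := abs_sub_le_mul_abs_sub_of_abs_succ_sub_le (g := fun b => f (labeledSample X1 X0 i b))
    (fun b => by simpa only [labeledSample_succ_right] using hf _ _) N j
  calc _ ≤ _ := abs_sub_le _ (f (labeledSample X1 X0 i N)) _
    _ ≤ _ := add_le_add h1 h0
    _ = _ := (mul_add _ _ _).symm

end LabeledSample

section ProbabilityWeights

variable {ι : Type*} {p : ι → ℝ}

lemma summable_mul_abs_of_summable_mul_sq (hp : 0 ≤ p) (hp1 : Summable p) {x : ι → ℝ}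
    (hx : Summable fun i => p i * x i ^ 2) : Summable fun i => p i * |x i| :=
  .of_nonneg_of_le (fun i => mul_nonneg (hp i) (abs_nonneg _))
    (fun i => by
      nlinarith [sq_abs (x i), mul_nonneg (hp i) (sq_nonneg (|x i| - 1)),
        mul_nonneg (hp i) (abs_nonneg (x i))])
    (hx.add hp1)

lemma tsum_mul_abs_le_sqrt (hp : 0 ≤ p) (hp1 : HasSum p 1) {x : ι → ℝ} {v : ℝ}
    (hx : HasSum (fun i => p i * x i ^ 2) v) : ∑' i, p i * |x i| ≤ √v := by
  set μ := ∑' i, p i * |x i|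
  have hμ : HasSum (fun i => p i * |x i|) μ :=
    (summable_mul_abs_of_summable_mul_sq hp hp1.summable hx.summable).hasSum
  have hvar : HasSum (fun i => p i * (|x i| - μ) ^ 2) (v - 2 * μ * μ + μ ^ 2 * 1) :=
    ((hx.sub (hμ.mul_left (2 * μ))).add (hp1.mul_left (μ ^ 2))).congr_fun fun i => by
      linear_combination p i * sq_abs (x i)
  have hμv : μ ^ 2 ≤ v := by
    nlinarith [hvar.nonneg fun i => mul_nonneg (hp i) (sq_nonneg (|x i| - μ))]
  exact (le_abs_self μ).trans (Real.abs_le_sqrt hμv)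

end ProbabilityWeights

lemma tsum_mul_mul_le_of_le_add {α β : Type*} {p : α → ℝ} {q : β → ℝ} (hp : 0 ≤ p) (hq : 0 ≤ q)
    (hp1 : HasSum p 1) (hq1 : HasSum q 1) {u : α → ℝ} {v : β → ℝ} (hu : 0 ≤ u) (hv : 0 ≤ v)
    (hpu : Summable fun a => p a * u a) (hqv : Summable fun b => q b * v b)
    {D : α × β → ℝ} (hD0 : 0 ≤ D) (hD : ∀ a b, D (a, b) ≤ u a + v b) :
    ∑' x, p x.1 * q x.2 * D x ≤ ∑' a, p a * u a + ∑' b, q b * v b := by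
  have hU : HasSum (fun x : α × β => p x.1 * u x.1 * q x.2) ((∑' a, p a * u a) * 1) :=
    hpu.hasSum.mul hq1 (hpu.mul_of_nonneg hq1.summable (fun a => mul_nonneg (hp a) (hu a)) hq)
  have hV : HasSum (fun x : α × β => p x.1 * (q x.2 * v x.2)) (1 * ∑' b, q b * v b) :=
    hp1.mul hqv.hasSum (hp1.summable.mul_of_nonneg hqv hp (fun b => mul_nonneg (hq b) (hv b)))
  have hbound (x : α × β) :
      p x.1 * q x.2 * D x ≤ p x.1 * u x.1 * q x.2 + p x.1 * (q x.2 * v x.2) := by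
    have := mul_le_mul_of_nonneg_left (hD x.1 x.2) (mul_nonneg (hp x.1) (hq x.2))
    linarith
  have hnonneg (x : α × β) : 0 ≤ p x.1 * q x.2 * D x :=
    mul_nonneg (mul_nonneg (hp x.1) (hq x.2)) (hD0 x)
  have hle := hasSum_le hbound
    (Summable.of_nonneg_of_le hnonneg hbound (hU.add hV).summable).hasSum (hU.add hV)
  rwa [mul_one, one_mul] at hle

section Poisson

variable (r : ℝ≥0)

lemma hasSum_poissonPMFReal : HasSum (poissonPMFReal r) 1 :=
  hasSum_one_poissonMeasure r

lemma poissonPMFReal_succ_mul (i : ℕ) :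
    poissonPMFReal r (i + 1) * (i + 1) = r * poissonPMFReal r i := by
  simp only [poissonPMFReal, Nat.factorial_succ]
  push_cast
  field_simp
  ring

lemma hasSum_poissonPMFReal_mul_self : HasSum (fun i => poissonPMFReal r i * i) r := by
  have h : HasSum (fun i => poissonPMFReal r (i + 1) * ((i + 1 : ℕ) : ℝ)) (r * 1) :=
    ((hasSum_poissonPMFReal r).mul_left (r : ℝ)).congr_fun fun i => by
      rw [Nat.cast_succ]
      exact poissonPMFReal_succ_mul r i
  have h0 := HasSum.zero_add (f := fun i => poissonPMFReal r i * i) h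
  rw [Nat.cast_zero, mul_zero, zero_add, mul_one] at h0
  exact h0

lemma hasSum_poissonPMFReal_mul_sq :
    HasSum (fun i => poissonPMFReal r i * i ^ 2) (r ^ 2 + r) := by
  have h : HasSum (fun i => poissonPMFReal r (i + 1) * ((i + 1 : ℕ) : ℝ) ^ 2) (r * (r + 1)) :=
    (((hasSum_poissonPMFReal_mul_self r).add (hasSum_poissonPMFReal r)).mul_left
      (r : ℝ)).congr_fun fun i => by
        push_cast
        linear_combination ((i : ℝ) + 1) * poissonPMFReal_succ_mul r i
  have h0 := HasSum.zero_add (f := fun i => poissonPMFReal r i * i ^ 2) h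
  rwa [Nat.cast_zero, zero_pow two_ne_zero, mul_zero, zero_add, mul_add_one, ← sq] at h0

lemma hasSum_poissonPMFReal_mul_sub_sq :
    HasSum (fun i => poissonPMFReal r i * (i - r) ^ 2) r := by
  have h := ((hasSum_poissonPMFReal_mul_sq r).sub
    ((hasSum_poissonPMFReal_mul_self r).mul_left (2 * (r : ℝ)))).add
    ((hasSum_poissonPMFReal r).mul_left ((r : ℝ) ^ 2))
  rw [show (r : ℝ) ^ 2 + r - 2 * r * r + r ^ 2 * 1 = r by ring] at h
  exact h.congr_fun fun i => by ring

lemma tsum_poissonPMFReal_mul_abs_sub_le_sqrt :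
    ∑' i, poissonPMFReal r i * |(i : ℝ) - r| ≤ √r :=
  tsum_mul_abs_le_sqrt (fun _ => poissonPMFReal_nonneg) (hasSum_poissonPMFReal r)
    (hasSum_poissonPMFReal_mul_sub_sq r)

lemma tsum_poissonPMFReal_mul_mul_le {m n : ℝ≥0} {k : ℝ} (hk : 0 ≤ k) {D : ℕ × ℕ → ℝ}
    (hD0 : 0 ≤ D) (hD : ∀ a b, D (a, b) ≤ k * (|(a : ℝ) - m| + |(b : ℝ) - n|)) :
    ∑' x, poissonPMFReal m x.1 * poissonPMFReal n x.2 * D x ≤ k * (√m + √n) := by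
  have hmad (r : ℝ≥0) : Summable fun i => poissonPMFReal r i * (k * |(i : ℝ) - r|) := by
    simpa only [mul_left_comm] using ((summable_mul_abs_of_summable_mul_sq
      (fun _ => poissonPMFReal_nonneg) (hasSum_poissonPMFReal r).summable
      (hasSum_poissonPMFReal_mul_sub_sq r).summable).mul_left k)
  refine (tsum_mul_mul_le_of_le_add (fun _ => poissonPMFReal_nonneg)
    (fun _ => poissonPMFReal_nonneg) (hasSum_poissonPMFReal m) (hasSum_poissonPMFReal n)
    (fun _ => mul_nonneg hk (abs_nonneg _)) (fun _ => mul_nonneg hk (abs_nonneg _))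
    (hmad m) (hmad n) hD0 fun a b => (hD a b).trans_eq (mul_add _ _ _)).trans ?_
  simp only [mul_left_comm _ k, tsum_mul_left, ← mul_add]
  exact mul_le_mul_of_nonneg_left (add_le_add (tsum_poissonPMFReal_mul_abs_sub_le_sqrt m)
    (tsum_poissonPMFReal_mul_abs_sub_le_sqrt n)) hk

end Poisson

lemma sqrt_add_sqrt_div_add_le {a b : ℝ} (ha : 0 ≤ a) (hb : 0 ≤ b) :
    (√a + √b) / (a + b) ≤ 2 / √(a + b) :=
  calc (√a + √b) / (a + b) ≤ (√(a + b) + √(a + b)) / (a + b) := by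
        gcongr
        · linarith
        · linarith
    _ = 2 / √(a + b) := by rw [← two_mul, mul_div_assoc, Real.sqrt_div_self', mul_one_div]

theorem poissonized_crossmatch_stability_general {d : ℕ} (k : ℝ) (hk : 0 ≤ k)
    (A : Finset ((Fin d → ℝ) × Bool) → ℕ)
    (hstab : ∀ (S : Finset ((Fin d → ℝ) × Bool)) (s t : (Fin d → ℝ) × Bool),
      |(A (S ∪ {s, t}) : ℝ) - (A S : ℝ)| ≤ k)
    (X1 X0 : ℕ → (Fin d → ℝ))
    (m n : ℕ → ℕ)
    (hm : Tendsto (fun j : ℕ => ((m j : ℝ))) atTop atTop)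
    (hn : Tendsto (fun j : ℕ => ((n j : ℝ))) atTop atTop) :
    (∀ M N i j : ℕ,
      |(A (((Finset.range M).image fun l => (X1 l, true)) ∪
            ((Finset.range N).image fun l => (X0 l, false))) : ℝ) -
       (A (((Finset.range i).image fun l => (X1 l, true)) ∪
            ((Finset.range j).image fun l => (X0 l, false))) : ℝ)|
        ≤ k * (|(M : ℝ) - (i : ℝ)| + |(N : ℝ) - (j : ℝ)|)) ∧
    Tendsto (fun j : ℕ =>
        (∑' p : ℕ × ℕ,
          poissonPMFReal (m j : NNReal) p.1 * poissonPMFReal (n j : NNReal) p.2 *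
          |(A (((Finset.range p.1).image fun l => (X1 l, true)) ∪
                ((Finset.range p.2).image fun l => (X0 l, false))) : ℝ) -
           (A (((Finset.range (m j)).image fun l => (X1 l, true)) ∪
                ((Finset.range (n j)).image fun l => (X0 l, false))) : ℝ)|) /
        ((m j : ℝ) + (n j : ℝ)))
      atTop (nhds 0) := by
  have hlip (M N i j : ℕ) :
      |(A (labeledSample X1 X0 M N) : ℝ) - A (labeledSample X1 X0 i j)| ≤
        k * (|(M : ℝ) - i| + |(N : ℝ) - j|) :=
    abs_sub_labeledSample_le X1 X0 (f := fun S => (A S : ℝ)) (fun S s => by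
      simpa only [Finset.pair_eq_singleton] using hstab S s s) M N i j
  refine ⟨hlip, ?_⟩
  have hmn : Tendsto (fun j => (m j : ℝ) + n j) atTop atTop := hm.atTop_add_atTop hn
  refine squeeze_zero (fun j => div_nonneg (tsum_nonneg fun x =>
      mul_nonneg (mul_nonneg poissonPMFReal_nonneg poissonPMFReal_nonneg) (abs_nonneg _))
    (by positivity))
    (fun j => ?_)
    (by simpa using (tendsto_const_nhds (x := (2 : ℝ)).div_atTop
      (Real.tendsto_sqrt_atTop.comp hmn)).const_mul k)
  calc _ ≤ k * (√(m j) + √(n j)) / ((m j : ℝ) + n j) := by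
        gcongr
        have hE := tsum_poissonPMFReal_mul_mul_le (m := m j) (n := n j) hk
          (D := fun x => |(A (labeledSample X1 X0 x.1 x.2) : ℝ) -
            A (labeledSample X1 X0 (m j) (n j))|)
          (fun x => abs_nonneg _) fun a b => by
            simpa only [NNReal.coe_natCast] using hlip a b (m j) (n j)
        rwa [NNReal.coe_natCast, NNReal.coe_natCast] at hE
    _ ≤ k * (2 / √((m j : ℝ) + n j)) := by
        rw [mul_div_assoc]
        exact mul_le_mul_of_nonneg_left
          (sqrt_add_sqrt_div_add_le (by positivity) (by positivity)) hk

/-- If the cross-match statistic `A` on labeled point sets satisfies the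
stability property `|A(S ∪ {s,t}) - A(S)| ≤ k`, then for Poissonized sample sizes
`M ~ Poisson(m)`, `N ~ Poisson(n)` (built on the same i.i.d. sequences of label-1 points
`X1` and label-0 points `X0`), the Poissonized and fixed-sample statistics satisfy
`|A'_{m,n} - A_{m,n}| ≤ k(|M - m| + |N - n|)` and hence
`(m+n)⁻¹ E|A'_{m,n} - A_{m,n}| → 0` as `m, n → ∞`. -/
theorem poissonized_crossmatch_stability {d : ℕ} (k : ℝ) (hk : 0 ≤ k)
    (A : Finset ((Fin d → ℝ) × Bool) → ℕ)
    (hstab : ∀ (S : Finset ((Fin d → ℝ) × Bool)) (s t : (Fin d → ℝ) × Bool),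
      |(A (S ∪ {s, t}) : ℝ) - (A S : ℝ)| ≤ k)
    (X1 X0 : ℕ → (Fin d → ℝ))
    (hX1 : Function.Injective X1) (hX0 : Function.Injective X0)
    (hdisj : ∀ i j, X1 i ≠ X0 j)
    (m n : ℕ → ℕ)
    (hm : Tendsto (fun j : ℕ => ((m j : ℝ))) atTop atTop)
    (hn : Tendsto (fun j : ℕ => ((n j : ℝ))) atTop atTop) :
    (∀ M N i j : ℕ,
      |(A (((Finset.range M).image fun l => (X1 l, true)) ∪
            ((Finset.range N).image fun l => (X0 l, false))) : ℝ) -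
       (A (((Finset.range i).image fun l => (X1 l, true)) ∪
            ((Finset.range j).image fun l => (X0 l, false))) : ℝ)|
        ≤ k * (|(M : ℝ) - (i : ℝ)| + |(N : ℝ) - (j : ℝ)|)) ∧
    Tendsto (fun j : ℕ =>
        (∑' p : ℕ × ℕ,
          poissonPMFReal (m j : NNReal) p.1 * poissonPMFReal (n j : NNReal) p.2 *
          |(A (((Finset.range p.1).image fun l => (X1 l, true)) ∪
                ((Finset.range p.2).image fun l => (X0 l, false))) : ℝ) -
           (A (((Finset.range (m j)).image fun l => (X1 l, true)) ∪
                ((Finset.range (n j)).image fun l => (X0 l, false))) : ℝ)|) /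
        ((m j : ℝ) + (n j : ℝ)))
      atTop (nhds 0) :=
  poissonized_crossmatch_stability_general k hk A hstab X1 X0 m n hm hn
end
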